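/- Consider N = dn and the switched system ẋ(t) = −L(t)x(t) with L : [0,∞) → ℝ^{dn×dn} piecewise constant, all values symmetric positive semidefinite. Suppose there is a subsequence of switching times t_{k_0} = t_0 < t_{k_1} < ⋯ with bounded gaps and q ∈ (0,1) such that for every l: the null space of the integral-network Laplacian over [t_{k_l}, t_{k_{l+1}}) equals the column space of C(1_n ⊗ Ψ), where Ψ = [φ_1, …, φ_m] ∈ ℝ^{d×m} has orthonormal columns, C = diag(σ_1 I_d, …, σ_n I_d) with each σ_i ∈ {+1, −1}; and the (m+1)-th largest eigenvalue of Φ(t_{k_{l+1}}, t_{k_l})^⊤ Φ(t_{k_{l+1}}, t_{k_l}) is at most q. Then every solution converges and lim_{t→∞} x(t) = C (1_n ⊗ ((1/n) Ψ (1_n^⊤ ⊗ Ψ^⊤) C x(t_0))). -/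

import Mathlib

/-!
Each `L(t_j)` is positive semidefinite, and the integral Laplacian of a span is a positive
combination of them, so every `L(t_j)` vanishes on `V = range C(1ₙ ⊗ Ψ)`. Hence the flow fixes
`V` pointwise, preserves `V⊥`, and each factor `exp(-Δ L)` shrinks the Euclidean norm. Because
`(C(1ₙ ⊗ Ψ))ᵀ C(1ₙ ⊗ Ψ) = n I`, the claimed limit `v` is the orthogonal projection of `x(t₀)`
onto `V`, so the error `x - v` stays in `V⊥`. There each span transition `Φₗ` contracts the squared
norm by `q`: `Φₗᵀ Φₗ` is the identity on the `m`-dimensional `V` and has at most `m` eigenvalues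
above `q`, so `V` is exactly spanned by their eigenvectors and all remaining eigenvalues are
`≤ q`. Thus `|x(t_{k_l}) - v|² ≤ qˡ |x(t₀) - v|²`, and monotonicity in between gives the limit.
-/

open Matrix Filter Kronecker

namespace Matrix

variable {ι : Type*} [Fintype ι]

open scoped Norms.Operator in
theorem exp_mulVec_of_mulVec_eq_smul [DecidableEq ι] {M : Matrix ι ι ℝ} {u : ι → ℝ} {c : ℝ}
    (h : M *ᵥ u = c • u) : NormedSpace.exp M *ᵥ u = Real.exp c • u := by
  have hpow (j : ℕ) : M ^ j *ᵥ u = c ^ j • u := by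
    induction j with
    | zero => simp
    | succ j ih => rw [pow_succ, ← mulVec_mulVec, h, mulVec_smul, ih, smul_smul, ← pow_succ']
  have hM := (NormedSpace.exp_series_hasSum_exp' (𝕂 := ℝ) M).map (mulVec.addMonoidHomLeft u)
    (continuous_id.matrix_mulVec continuous_const)
  have hc := (NormedSpace.exp_series_hasSum_exp' (𝕂 := ℝ) c).smul_const u
  rw [← Real.exp_eq_exp_ℝ] at hc
  refine hM.unique (hc.congr_fun fun j => ?_)
  simp [mulVec.addMonoidHomLeft, smul_mulVec, hpow, smul_smul]

theorem exp_smul_mulVec_eq_self [DecidableEq ι] {M : Matrix ι ι ℝ} {v : ι → ℝ}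
    (hv : M *ᵥ v = 0) (c : ℝ) : NormedSpace.exp (c • M) *ᵥ v = v := by
  simpa using exp_mulVec_of_mulVec_eq_smul (M := c • M) (c := 0) (by simp [smul_mulVec, hv])

theorem IsHermitian.transpose_exp_smul [DecidableEq ι] {M : Matrix ι ι ℝ} (hM : M.IsHermitian)
    (c : ℝ) : (NormedSpace.exp (c • M))ᵀ = NormedSpace.exp (c • M) := by
  rw [← exp_transpose, transpose_smul, ← conjTranspose_eq_transpose_of_trivial, hM.eq]

theorem mulVec_dotProduct_mulVec_self {κ R : Type*} [Fintype κ] [CommSemiring R]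
    (A : Matrix κ ι R) (z : ι → R) : (A *ᵥ z) ⬝ᵥ (A *ᵥ z) = z ⬝ᵥ ((Aᵀ * A) *ᵥ z) := by
  rw [← mulVec_mulVec, dotProduct_mulVec z, vecMul_transpose]

theorem IsHermitian.exists_eigenvectors_expansion [DecidableEq ι] {A : Matrix ι ι ℝ}
    (hA : A.IsHermitian) :
    ∃ u : ι → ι → ℝ, (∀ i, A *ᵥ u i = hA.eigenvalues i • u i) ∧
      ∀ x : ι → ℝ, x = ∑ i, (u i ⬝ᵥ x) • u i := by
  let b := hA.eigenvectorBasis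
  refine ⟨fun i => b i, hA.mulVec_eigenvectorBasis, fun x => ?_⟩
  have h := congrArg WithLp.ofLp (b.sum_repr (WithLp.toLp 2 x)).symm
  simpa [b.repr_apply_apply, PiLp.inner_apply, dotProduct, mul_comm] using h

theorem dotProduct_mulVec_eq_sum_of_eigen {S : Matrix ι ι ℝ} {u : ι → ι → ℝ} {μ : ι → ℝ}
    (heig : ∀ i, S *ᵥ u i = μ i • u i) (hexp : ∀ x : ι → ℝ, x = ∑ i, (u i ⬝ᵥ x) • u i)
    (z : ι → ℝ) : z ⬝ᵥ (S *ᵥ z) = ∑ i, μ i * (u i ⬝ᵥ z) ^ 2 := by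
  have hSz : S *ᵥ z = ∑ i, ((u i ⬝ᵥ z) * μ i) • u i := by
    conv_lhs => rw [hexp z]
    simp only [mulVec_sum, mulVec_smul, heig, smul_smul]
  rw [hSz, dotProduct_sum]
  refine Finset.sum_congr rfl fun i _ => ?_
  rw [dotProduct_smul, smul_eq_mul, dotProduct_comm z]
  ring

theorem dotProduct_self_eq_sum_of_expansion {u : ι → ι → ℝ}
    (hexp : ∀ x : ι → ℝ, x = ∑ i, (u i ⬝ᵥ x) • u i) (z : ι → ℝ) :
    z ⬝ᵥ z = ∑ i, (u i ⬝ᵥ z) ^ 2 := by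
  classical
  simpa using dotProduct_mulVec_eq_sum_of_eigen (S := 1) (μ := 1) (by simp) hexp z

theorem PosSemidef.exp_smul_mulVec_dotProduct_self_le [DecidableEq ι] {M : Matrix ι ι ℝ}
    (hM : M.PosSemidef) {c : ℝ} (hc : c ≤ 0) (z : ι → ℝ) :
    (NormedSpace.exp (c • M) *ᵥ z) ⬝ᵥ (NormedSpace.exp (c • M) *ᵥ z) ≤ z ⬝ᵥ z := by
  obtain ⟨u, heig, hexp⟩ := hM.1.exists_eigenvectors_expansion
  set A := NormedSpace.exp (c • M)
  have hAu (i : ι) : A *ᵥ u i = Real.exp (c * hM.1.eigenvalues i) • u i :=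
    exp_mulVec_of_mulVec_eq_smul (by rw [smul_mulVec, heig, smul_smul])
  have hAA (i : ι) : (Aᵀ * A) *ᵥ u i = Real.exp (c * hM.1.eigenvalues i) ^ 2 • u i := by
    rw [← mulVec_mulVec, hM.1.transpose_exp_smul, hAu, mulVec_smul, hAu, smul_smul, sq]
  calc (A *ᵥ z) ⬝ᵥ (A *ᵥ z) = z ⬝ᵥ ((Aᵀ * A) *ᵥ z) := mulVec_dotProduct_mulVec_self A z
    _ = ∑ i, Real.exp (c * hM.1.eigenvalues i) ^ 2 * (u i ⬝ᵥ z) ^ 2 :=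
        dotProduct_mulVec_eq_sum_of_eigen hAA hexp z
    _ ≤ ∑ i, (u i ⬝ᵥ z) ^ 2 := by
        refine Finset.sum_le_sum fun i _ => mul_le_of_le_one_left (sq_nonneg _) ?_
        refine pow_le_one₀ (Real.exp_pos _).le (Real.exp_le_one_iff.2 ?_)
        exact mul_nonpos_of_nonpos_of_nonneg hc (hM.eigenvalues_nonneg i)
    _ = z ⬝ᵥ z := (dotProduct_self_eq_sum_of_expansion hexp z).symm

theorem PosSemidef.mulVec_eq_zero_of_sum_smul_mulVec_eq_zero {κ : Type*} {s : Finset κ}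
    {A : κ → Matrix ι ι ℝ} {c : κ → ℝ} (hA : ∀ i ∈ s, (A i).PosSemidef) (hc : ∀ i ∈ s, 0 < c i)
    {v : ι → ℝ} (h : (∑ i ∈ s, c i • A i) *ᵥ v = 0) : ∀ i ∈ s, A i *ᵥ v = 0 := by
  have hterm : ∀ i ∈ s, 0 ≤ c i * (v ⬝ᵥ (A i *ᵥ v)) := fun i hi =>
    mul_nonneg (hc i hi).le (by simpa using (hA i hi).dotProduct_mulVec_nonneg v)
  have hsum : ∑ i ∈ s, c i * (v ⬝ᵥ (A i *ᵥ v)) = 0 := by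
    simpa [sum_mulVec, dotProduct_sum, smul_mulVec] using congrArg (v ⬝ᵥ ·) h
  intro i hi
  refine ((hA i hi).dotProduct_mulVec_zero_iff v).1 ?_
  simpa [(hc i hi).ne'] using (Finset.sum_eq_zero_iff_of_nonneg hterm).1 hsum i hi

open Polynomial in
theorem IsHermitian.card_eigenvalues_gt_le [DecidableEq ι] {S : Matrix ι ι ℝ}
    (hS : S.IsHermitian) {N m : ℕ} {μ : Fin N → ℝ} (hμ : Antitone μ)
    (hcp : S.charpoly = ∏ i, (X - C (μ i))) {q : ℝ} (hμq : ∀ i : Fin N, (i : ℕ) = m → μ i ≤ q) :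
    (Finset.univ.filter fun i => q < hS.eigenvalues i).card ≤ m := by
  have hroots : Finset.univ.val.map hS.eigenvalues = Finset.univ.val.map μ := by
    have h := hS.roots_charpoly_eq_eigenvalues
    rw [hcp, roots_prod _ _ (by simp [Finset.prod_ne_zero_iff, X_sub_C_ne_zero])] at h
    simpa using h.symm
  have hlt : ∀ j ∈ Finset.univ.filter fun j => q < μ j, (j : ℕ) ∈ Finset.range m := by
    intro j hj
    rw [Finset.mem_filter] at hj
    by_contra! hmj
    rw [Finset.mem_range, not_lt] at hmj
    have hm : m < N := hmj.trans_lt j.2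
    exact (hj.2.trans_le ((hμ hmj).trans (hμq ⟨m, hm⟩ rfl))).false
  calc (Finset.univ.filter fun i => q < hS.eigenvalues i).card
      = (Finset.univ.filter fun j => q < μ j).card := by
        have h := congrArg (Multiset.countP (q < ·)) hroots
        rwa [Multiset.countP_map, Multiset.countP_map] at h
    _ ≤ (Finset.range m).card := Finset.card_le_card_of_injOn _ hlt Fin.val_injective.injOn
    _ = m := Finset.card_range m

theorem IsHermitian.dotProduct_mulVec_le_of_card_eigenvalues_gt_le [DecidableEq ι]
    {S : Matrix ι ι ℝ} (hS : S.IsHermitian) {V : Submodule ℝ (ι → ℝ)}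
    (hSV : ∀ v ∈ V, S *ᵥ v = v) {q : ℝ} (hq : q < 1)
    (hcard : (Finset.univ.filter fun i => q < hS.eigenvalues i).card ≤ Module.finrank ℝ V)
    {e : ι → ℝ} (he : ∀ v ∈ V, v ⬝ᵥ e = 0) : e ⬝ᵥ (S *ᵥ e) ≤ q * (e ⬝ᵥ e) := by
  obtain ⟨u, heig, hexp⟩ := hS.exists_eigenvectors_expansion
  set F := Finset.univ.filter fun i => q < hS.eigenvalues i
  have hST : Sᵀ = S := by rw [← conjTranspose_eq_transpose_of_trivial, hS.eq]
  have hdot (i : ι) (z : ι → ℝ) : u i ⬝ᵥ (S *ᵥ z) = hS.eigenvalues i * (u i ⬝ᵥ z) := by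
    rw [dotProduct_mulVec, ← mulVec_transpose, hST, heig, smul_dotProduct, smul_eq_mul]
  -- `V` lies in the eigenspace for the eigenvalue `1 > q`, and has at least as many dimensions
  -- as there are eigenvalues above `q`; so it is spanned by the corresponding eigenvectors.
  have hVF : V ≤ Submodule.span ℝ (F.image u : Set (ι → ℝ)) := by
    intro v hv
    have hcoef : ∀ i ∉ F, u i ⬝ᵥ v = 0 := by
      intro i hi
      have h1 : hS.eigenvalues i * (u i ⬝ᵥ v) = u i ⬝ᵥ v := by rw [← hdot, hSV v hv]
      by_contra h0
      have : hS.eigenvalues i = 1 := by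
        simpa using mul_right_cancel₀ h0 (h1.trans (one_mul _).symm)
      exact hi (Finset.mem_filter.2 ⟨Finset.mem_univ i, this ▸ hq⟩)
    rw [hexp v, ← Finset.sum_subset (Finset.subset_univ F) fun i _ hi => by
      rw [hcoef i hi, zero_smul]]
    exact Submodule.sum_mem _ fun i hi => Submodule.smul_mem _ _
      (Submodule.subset_span (Finset.mem_image_of_mem u hi))
  have hFV : Submodule.span ℝ (F.image u : Set (ι → ℝ)) ≤ V := by
    refine (Submodule.eq_of_le_of_finrank_le hVF ?_).ge
    exact (finrank_span_finset_le_card _).trans (Finset.card_image_le.trans hcard)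
  have hue : ∀ i ∈ F, u i ⬝ᵥ e = 0 := fun i hi =>
    he _ (hFV (Submodule.subset_span (Finset.mem_image_of_mem u hi)))
  calc e ⬝ᵥ (S *ᵥ e) = ∑ i, hS.eigenvalues i * (u i ⬝ᵥ e) ^ 2 :=
        dotProduct_mulVec_eq_sum_of_eigen heig hexp e
    _ ≤ ∑ i, q * (u i ⬝ᵥ e) ^ 2 := by
        refine Finset.sum_le_sum fun i _ => ?_
        by_cases hi : i ∈ F
        · simp [hue i hi]
        · exact mul_le_mul_of_nonneg_right (by simpa [F] using hi) (sq_nonneg _)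
    _ = q * (e ⬝ᵥ e) := by rw [← Finset.mul_sum, dotProduct_self_eq_sum_of_expansion hexp]

theorem finrank_range_mulVecLin_of_transpose_mul_self_eq_smul {κ : Type*} [Fintype κ]
    [DecidableEq κ] {B : Matrix ι κ ℝ} {c : ℝ} (hc : c ≠ 0) (hB : Bᵀ * B = c • 1) :
    Module.finrank ℝ (LinearMap.range B.mulVecLin) = Fintype.card κ := by
  rw [← rank, ← rank_transpose_mul_self, hB, rank_of_isUnit]
  simp [isUnit_iff_isUnit_det, hc]

theorem dotProduct_sub_smul_mul_transpose_mulVec_eq_zero {κ : Type*} [Fintype κ] [DecidableEq κ]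
    {B : Matrix ι κ ℝ} {c : ℝ} (hc : c ≠ 0) (hB : Bᵀ * B = c • 1) (x : ι → ℝ) {w : ι → ℝ}
    (hw : w ∈ LinearMap.range B.mulVecLin) : w ⬝ᵥ (x - c⁻¹ • ((B * Bᵀ) *ᵥ x)) = 0 := by
  obtain ⟨z, rfl⟩ := hw
  have hBT : Bᵀ *ᵥ (x - c⁻¹ • ((B * Bᵀ) *ᵥ x)) = 0 := by
    rw [mulVec_sub, mulVec_smul, mulVec_mulVec, ← Matrix.mul_assoc, hB, smul_mul, Matrix.one_mul,
      smul_mulVec, smul_smul, inv_mul_cancel₀ hc, one_smul, sub_self]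
  rw [mulVecLin_apply, dotProduct_comm, dotProduct_mulVec, ← mulVec_transpose, hBT,
    zero_dotProduct]

theorem diagonal_transpose_mul_self_eq_one [DecidableEq ι] {R : Type*} [CommRing R]
    {σ : ι → R} (hσ : ∀ i, σ i = 1 ∨ σ i = -1) : (diagonal σ)ᵀ * diagonal σ = 1 := by
  rw [diagonal_transpose, diagonal_mul_diagonal, ← diagonal_one]
  exact congrArg diagonal (funext fun i => by rcases hσ i with h | h <;> simp [h])

theorem transpose_mul_self_of_ones {α R : Type*} [Fintype α] [CommSemiring R] :
    (of fun _ _ => 1 : Matrix α Unit R)ᵀ * (of fun _ _ => 1 : Matrix α Unit R) =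
      (Fintype.card α : R) • (1 : Matrix Unit Unit R) := by
  ext
  simp [mul_apply]

theorem transpose_mul_self_mul_kronecker {R α β γ δ : Type*} [CommSemiring R] [Fintype α]
    [Fintype β] [DecidableEq α] [DecidableEq β] {C : Matrix (α × β) (α × β) R} (hC : Cᵀ * C = 1)
    (A : Matrix α γ R) (B : Matrix β δ R) :
    (C * (A ⊗ₖ B))ᵀ * (C * (A ⊗ₖ B)) = (Aᵀ * A) ⊗ₖ (Bᵀ * B) := by
  rw [transpose_mul, Matrix.mul_assoc, ← Matrix.mul_assoc Cᵀ, hC, Matrix.one_mul,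
    ← kroneckerMap_transpose, mul_kronecker_mul]

theorem tendsto_nhds_zero_of_dotProduct_self {α : Type*} {l : Filter α} {y : α → ι → ℝ}
    (h : Tendsto (fun a => y a ⬝ᵥ y a) l (nhds 0)) : Tendsto y l (nhds 0) := by
  refine tendsto_pi_nhds.2 fun p => squeeze_zero_norm (fun a => ?_) (by simpa using h.sqrt)
  refine Real.abs_le_sqrt ?_
  rw [sq]
  exact Finset.single_le_sum (f := fun i => y a i * y a i) (fun i _ => mul_self_nonneg _)
    (Finset.mem_univ p)

end Matrix

theorem tendsto_nhds_zero_of_le_on_Icc {t : ℕ → ℝ} (ht : StrictMono t)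
    (htlim : Tendsto t atTop atTop) {f : ℝ → ℝ} {g : ℕ → ℝ} (hg : Tendsto g atTop (nhds 0))
    (hf : ∀ s, 0 ≤ f s) (hfg : ∀ j, ∀ s ∈ Set.Icc (t j) (t (j + 1)), f s ≤ g j) :
    Tendsto f atTop (nhds 0) := by
  refine tendsto_order.2 ⟨fun a ha => .of_forall fun s => ha.trans_le (hf s), fun a ha => ?_⟩
  obtain ⟨J, hJ⟩ := eventually_atTop.1 (hg.eventually (gt_mem_nhds ha))
  filter_upwards [eventually_ge_atTop (t J)] with s hs
  obtain ⟨j, hjs, hsj⟩ := Nat.exists_not_and_succ_of_not_zero_of_exists (p := fun j => s < t j)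
    (not_lt.2 ((ht.monotone J.zero_le).trans hs)) ((htlim.eventually_gt_atTop s).exists)
  have hJj : J ≤ j := by
    by_contra! hjJ
    exact (hsj.trans_le (ht.monotone hjJ)).not_ge hs
  exact (hfg j s ⟨not_lt.1 hjs, hsj.le⟩).trans_lt (hJ j hJj)

theorem mulVec_eq_zero_of_le_ker_average {ι : Type*} [Fintype ι] {t : ℕ → ℝ} (ht : StrictMono t)
    {M : ℕ → Matrix ι ι ℝ} (hM : ∀ j, (M j).PosSemidef) {k : ℕ → ℕ} (hk0 : k 0 = 0)
    (hk : StrictMono k) {V : Submodule ℝ (ι → ℝ)}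
    (hker : ∀ l, V ≤ LinearMap.ker ((t (k (l + 1)) - t (k l))⁻¹ •
      ∑ i ∈ Finset.range (k (l + 1) - k l),
        (t (k l + i + 1) - t (k l + i)) • M (k l + i)).mulVecLin)
    (j : ℕ) {v : ι → ℝ} (hv : v ∈ V) : M j *ᵥ v = 0 := by
  obtain ⟨l, hjl, hjl'⟩ := Nat.exists_not_and_succ_of_not_zero_of_exists (p := fun l => j < k l)
    (by simp [hk0]) ⟨j + 1, (Nat.lt_succ_self j).trans_le hk.le_apply⟩
  have hsum := hker l hv
  rw [LinearMap.mem_ker, mulVecLin_apply, smul_mulVec, smul_eq_zero,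
    or_iff_right (inv_ne_zero (sub_pos.2 (ht (hk (lt_add_one l)))).ne')] at hsum
  have h := PosSemidef.mulVec_eq_zero_of_sum_smul_mulVec_eq_zero (fun i _ => hM _)
    (fun i _ => sub_pos.2 (ht (lt_add_one _))) hsum (j - k l) (Finset.mem_range.2 (by omega))
  rwa [Nat.add_sub_cancel' (not_lt.1 hjl)] at h

section SwitchedFlow

variable {ι : Type*} [Fintype ι] [DecidableEq ι]

/-- The state transition matrix `Φ(t (a + c), t a)` of `ẋ = -M j x` on `[t j, t (j + 1))`. -/
noncomputable def switchedTransition (t : ℕ → ℝ) (M : ℕ → Matrix ι ι ℝ) (a c : ℕ) :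
    Matrix ι ι ℝ :=
  ((List.ofFn fun i : Fin c =>
    NormedSpace.exp (-(t (a + i + 1) - t (a + i)) • M (a + i))).reverse).prod

variable {t : ℕ → ℝ} {M : ℕ → Matrix ι ι ℝ}

theorem switchedTransition_zero (a : ℕ) : switchedTransition t M a 0 = 1 := rfl

theorem switchedTransition_succ (a c : ℕ) :
    switchedTransition t M a (c + 1) =
      NormedSpace.exp (-(t (a + c + 1) - t (a + c)) • M (a + c)) * switchedTransition t M a c := by
  simp only [switchedTransition, List.ofFn_succ', List.concat_eq_append, List.reverse_append,
    List.reverse_singleton, List.singleton_append, List.prod_cons, Fin.val_last, Fin.val_castSucc]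

theorem switchedTransition_mulVec {y : ℕ → ι → ℝ}
    (hy : ∀ j, y (j + 1) = NormedSpace.exp (-(t (j + 1) - t j) • M j) *ᵥ y j) (a c : ℕ) :
    switchedTransition t M a c *ᵥ y a = y (a + c) := by
  induction c with
  | zero => simp [switchedTransition_zero]
  | succ c ih => rw [switchedTransition_succ, ← mulVec_mulVec, ih, ← add_assoc, hy]

theorem switchedTransition_mulVec_eq_self {v : ι → ℝ} (hv : ∀ j, M j *ᵥ v = 0) (a c : ℕ) :
    switchedTransition t M a c *ᵥ v = v := by
  induction c with
  | zero => simp [switchedTransition_zero]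
  | succ c ih => rw [switchedTransition_succ, ← mulVec_mulVec, ih, exp_smul_mulVec_eq_self (hv _)]

theorem switchedTransition_transpose_mulVec_eq_self (hM : ∀ j, (M j).IsHermitian) {v : ι → ℝ}
    (hv : ∀ j, M j *ᵥ v = 0) (a c : ℕ) : (switchedTransition t M a c)ᵀ *ᵥ v = v := by
  induction c with
  | zero => simp [switchedTransition_zero]
  | succ c ih =>
    rw [switchedTransition_succ, transpose_mul, ← mulVec_mulVec, (hM _).transpose_exp_smul,
      exp_smul_mulVec_eq_self (hv _), ih]

open Polynomial in
theorem switchedTransition_contracts (hM : ∀ j, (M j).IsHermitian) {V : Submodule ℝ (ι → ℝ)}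
    (hMV : ∀ j, ∀ v ∈ V, M j *ᵥ v = 0) (a c : ℕ) {q : ℝ} (hq : q < 1) {N : ℕ} {μ : Fin N → ℝ}
    (hμ : Antitone μ)
    (hcp : ((switchedTransition t M a c)ᵀ * switchedTransition t M a c).charpoly =
      ∏ i, (X - C (μ i)))
    (hμq : ∀ i : Fin N, (i : ℕ) = Module.finrank ℝ V → μ i ≤ q) {e : ι → ℝ}
    (he : ∀ v ∈ V, v ⬝ᵥ e = 0) :
    (switchedTransition t M a c *ᵥ e) ⬝ᵥ (switchedTransition t M a c *ᵥ e) ≤ q * (e ⬝ᵥ e) := by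
  set Φ := switchedTransition t M a c
  have hS : (Φᵀ * Φ).IsHermitian := isHermitian_conjTranspose_mul_self Φ
  have hSV : ∀ v ∈ V, (Φᵀ * Φ) *ᵥ v = v := fun v hv => by
    rw [← mulVec_mulVec, switchedTransition_mulVec_eq_self (hMV · v hv),
      switchedTransition_transpose_mulVec_eq_self hM (hMV · v hv)]
  rw [mulVec_dotProduct_mulVec_self]
  exact hS.dotProduct_mulVec_le_of_card_eigenvalues_gt_le hSV hq
    (hS.card_eigenvalues_gt_le hμ hcp hμq) he

theorem tendsto_zero_of_switchedTransition_contracts (ht : StrictMono t)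
    (htlim : Tendsto t atTop atTop) (hM : ∀ j, (M j).PosSemidef) {V : Submodule ℝ (ι → ℝ)}
    (hMV : ∀ j, ∀ v ∈ V, M j *ᵥ v = 0) {k : ℕ → ℕ} (hk0 : k 0 = 0) (hk : StrictMono k) {q : ℝ}
    (hq0 : 0 ≤ q) (hq1 : q < 1)
    (hΦ : ∀ l, ∀ e : ι → ℝ, (∀ v ∈ V, v ⬝ᵥ e = 0) →
      (switchedTransition t M (k l) (k (l + 1) - k l) *ᵥ e) ⬝ᵥ
        (switchedTransition t M (k l) (k (l + 1) - k l) *ᵥ e) ≤ q * (e ⬝ᵥ e))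
    {y : ℝ → ι → ℝ}
    (hy : ∀ j, ∀ s ∈ Set.Icc (t j) (t (j + 1)),
      y s = NormedSpace.exp (-(s - t j) • M j) *ᵥ y (t j))
    (hy0 : ∀ v ∈ V, v ⬝ᵥ y (t 0) = 0) : Tendsto y atTop (nhds 0) := by
  have hstep (j : ℕ) : y (t (j + 1)) = NormedSpace.exp (-(t (j + 1) - t j) • M j) *ᵥ y (t j) :=
    hy j _ ⟨(ht (lt_add_one j)).le, le_rfl⟩
  have horth (j : ℕ) : ∀ v ∈ V, v ⬝ᵥ y (t j) = 0 := by
    induction j with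
    | zero => exact hy0
    | succ j ih =>
      intro v hv
      rw [hstep, dotProduct_mulVec, ← mulVec_transpose, (hM j).1.transpose_exp_smul,
        exp_smul_mulVec_eq_self (hMV j v hv), ih v hv]
  set g : ℕ → ℝ := fun j => y (t j) ⬝ᵥ y (t j)
  have hg_anti : Antitone g := antitone_nat_of_succ_le fun j => by
    simp only [g, hstep j]
    exact (hM j).exp_smul_mulVec_dotProduct_self_le
      (neg_nonpos.2 (sub_nonneg.2 (ht (lt_add_one j)).le)) _
  have hg_sub (l : ℕ) : g (k l) ≤ q ^ l * g 0 := by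
    induction l with
    | zero => simp [hk0]
    | succ l ih =>
      have hΦy := switchedTransition_mulVec (y := fun j => y (t j)) hstep (k l) (k (l + 1) - k l)
      rw [Nat.add_sub_cancel' (hk.monotone (Nat.le_add_right l 1))] at hΦy
      calc g (k (l + 1)) ≤ q * g (k l) := by simpa only [g, hΦy] using hΦ l _ (horth (k l))
        _ ≤ q * (q ^ l * g 0) := mul_le_mul_of_nonneg_left ih hq0
        _ = q ^ (l + 1) * g 0 := by ring
  have hg : Tendsto g atTop (nhds 0) := by
    rw [tendsto_iff_tendsto_subseq_of_antitone hg_anti hk.tendsto_atTop]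
    refine squeeze_zero (fun l => Fintype.sum_nonneg fun _ => mul_self_nonneg _) hg_sub ?_
    simpa using (tendsto_pow_atTop_nhds_zero_of_lt_one hq0 hq1).mul_const (g 0)
  refine tendsto_nhds_zero_of_dotProduct_self (tendsto_nhds_zero_of_le_on_Icc ht htlim hg
    (fun s => Fintype.sum_nonneg fun _ => mul_self_nonneg _) fun j s hs => ?_)
  rw [hy j s hs]
  exact (hM j).exp_smul_mulVec_dotProduct_self_le (neg_nonpos.2 (sub_nonneg.2 hs.1)) _

end SwitchedFlow

theorem bipartite_consensus_switching_general
    (n d m : ℕ)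
    (t : ℕ → ℝ) (ht0 : t 0 = 0) (htmono : StrictMono t)
    (htlim : Tendsto t atTop atTop)
    (L : ℝ → Matrix (Fin n × Fin d) (Fin n × Fin d) ℝ)
    (hLpsd : ∀ s : ℝ, 0 ≤ s → (L s).PosSemidef)
    (k : ℕ → ℕ) (hk0 : k 0 = 0) (hkmono : StrictMono k)
    (q : ℝ) (hq : q ∈ Set.Ioo (0 : ℝ) 1)
    (Ψ : Matrix (Fin d) (Fin m) ℝ) (hΨ : Ψᵀ * Ψ = 1)
    (σ : Fin n → ℝ) (hσ : ∀ i, σ i = 1 ∨ σ i = -1)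
    (C : Matrix (Fin n × Fin d) (Fin n × Fin d) ℝ)
    (hC : C = Matrix.diagonal fun p : Fin n × Fin d => σ p.1)
    (oneN : Matrix (Fin n) Unit ℝ) (honeN : oneN = Matrix.of fun _ _ => (1 : ℝ))
    (hker : ∀ l : ℕ,
      LinearMap.ker ((t (k (l + 1)) - t (k l))⁻¹ •
        ∑ i ∈ Finset.range (k (l + 1) - k l),
          (t (k l + i + 1) - t (k l + i)) • L (t (k l + i))).mulVecLin
      = LinearMap.range (C * (oneN ⊗ₖ Ψ)).mulVecLin)
    (Φl : ℕ → Matrix (Fin n × Fin d) (Fin n × Fin d) ℝ)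
    (hΦl : ∀ l : ℕ, Φl l = ((List.ofFn fun i : Fin (k (l + 1) - k l) =>
      NormedSpace.exp
        (-(t (k l + (i : ℕ) + 1) - t (k l + (i : ℕ))) • L (t (k l + (i : ℕ))))).reverse).prod)
    (hμ : ∀ l : ℕ, ∃ μ : Fin (n * d) → ℝ, Antitone μ ∧
      ((Φl l)ᵀ * Φl l).charpoly = (∏ i : Fin (n * d), (Polynomial.X - Polynomial.C (μ i))) ∧
      ∀ i : Fin (n * d), (i : ℕ) = m → μ i ≤ q) :
    ∀ x : ℝ → (Fin n × Fin d → ℝ),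
      (∀ k' : ℕ, ∀ s ∈ Set.Icc (t k') (t (k' + 1)),
        x s = NormedSpace.exp (-(s - t k') • L (t k')) *ᵥ x (t k')) →
      Tendsto x atTop
        (nhds ((n : ℝ)⁻¹ • ((C * ((oneN ⊗ₖ Ψ) * (oneNᵀ ⊗ₖ Ψᵀ)) * C) *ᵥ x 0))) := by
  intro x hx
  obtain rfl | hn := Nat.eq_zero_or_pos n
  · exact tendsto_const_nhds.congr fun _ => Subsingleton.elim _ _
  have hCC : Cᵀ * C = 1 := hC ▸ diagonal_transpose_mul_self_eq_one fun p => hσ p.1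
  set B := C * (oneN ⊗ₖ Ψ)
  have hB : Bᵀ * B = (n : ℝ) • 1 := by
    rw [transpose_mul_self_mul_kronecker hCC, hΨ, honeN, transpose_mul_self_of_ones,
      Fintype.card_fin, smul_kronecker, one_kronecker_one]
  have hBB : C * ((oneN ⊗ₖ Ψ) * (oneNᵀ ⊗ₖ Ψᵀ)) * C = B * Bᵀ := by
    rw [transpose_mul, kroneckerMap_transpose, hC, diagonal_transpose]
    simp only [B, hC, Matrix.mul_assoc]
  rw [hBB]
  set V := LinearMap.range B.mulVecLin
  set v := (n : ℝ)⁻¹ • ((B * Bᵀ) *ᵥ x 0)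
  have hn0 : (n : ℝ) ≠ 0 := by positivity
  have hvV : v ∈ V := V.smul_mem _ ⟨Bᵀ *ᵥ x 0, by simp [mulVec_mulVec]⟩
  have hV : Module.finrank ℝ V = m := by
    simp [V, finrank_range_mulVecLin_of_transpose_mul_self_eq_smul hn0 hB]
  have hL (j : ℕ) : (L (t j)).PosSemidef := hLpsd _ (ht0 ▸ htmono.monotone j.zero_le)
  have hLV := mulVec_eq_zero_of_le_ker_average htmono hL hk0 hkmono fun l => (hker l).ge
  have hy := tendsto_zero_of_switchedTransition_contracts (M := fun j => L (t j)) htmono htlim hL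
    hLV hk0 hkmono hq.1.le hq.2 (y := fun s => x s - v) (fun l e he => by
      obtain ⟨μ, hμanti, hcp, hμq⟩ := hμ l
      rw [hΦl l] at hcp
      exact switchedTransition_contracts (fun j => (hL j).1) hLV _ _ hq.2 hμanti hcp
        (hV ▸ hμq) he)
    (fun j s hs => by rw [mulVec_sub, exp_smul_mulVec_eq_self (hLV j hvV), ← hx j s hs])
    (fun w hw => by
      simpa only [ht0] using dotProduct_sub_smul_mul_transpose_mulVec_eq_zero hn0 hB (x 0) hw)
  simpa using hy.add_const v

/-- **bipartite consensus.** Consider `ẋ = -L(t) x` on `ℝ^{dn}` (coordinates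
indexed by `Fin n × Fin d`) with piecewise-constant symmetric positive semidefinite generator.
Suppose there is a subsequence of switching times `t (k 0) = t 0 < t (k 1) < ⋯` with bounded
gaps and `q ∈ (0,1)` such that for every `l`: the null space of the integral-network Laplacian
over `[t (k l), t (k (l+1)))` equals the column space of `C (1ₙ ⊗ Ψ)`, where `Ψ ∈ ℝ^{d×m}` has
orthonormal columns and `C = diag(σ₁ I_d, …, σₙ I_d)` with `σᵢ ∈ {±1}`; and the `(m+1)`-st
largest eigenvalue of `Φₗᵀ Φₗ` is at most `q`. Then every solution converges, with
`lim_{t→∞} x(t) = C (1ₙ ⊗ ((1/n) Ψ (1ₙᵀ ⊗ Ψᵀ) C x(t₀))) = (1/n) C (1ₙ⊗Ψ)(1ₙᵀ⊗Ψᵀ) C x(t₀)`. -/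
theorem bipartite_consensus_switching
    (n d m : ℕ)
    (t : ℕ → ℝ) (ht0 : t 0 = 0) (htmono : StrictMono t)
    (htlim : Tendsto t atTop atTop)
    (L : ℝ → Matrix (Fin n × Fin d) (Fin n × Fin d) ℝ)
    (hLpsd : ∀ s : ℝ, 0 ≤ s → (L s).PosSemidef)
    (hLpc : ∀ k : ℕ, ∀ s ∈ Set.Ico (t k) (t (k + 1)), L s = L (t k))
    (k : ℕ → ℕ) (hk0 : k 0 = 0) (hkmono : StrictMono k)
    (h : ℝ) (hgap : ∀ l : ℕ, t (k (l + 1)) - t (k l) ≤ h)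
    (q : ℝ) (hq : q ∈ Set.Ioo (0 : ℝ) 1)
    (Ψ : Matrix (Fin d) (Fin m) ℝ) (hΨ : Ψᵀ * Ψ = 1)
    (σ : Fin n → ℝ) (hσ : ∀ i, σ i = 1 ∨ σ i = -1)
    (C : Matrix (Fin n × Fin d) (Fin n × Fin d) ℝ)
    (hC : C = Matrix.diagonal fun p : Fin n × Fin d => σ p.1)
    (oneN : Matrix (Fin n) Unit ℝ) (honeN : oneN = Matrix.of fun _ _ => (1 : ℝ))
    (hker : ∀ l : ℕ,
      LinearMap.ker ((t (k (l + 1)) - t (k l))⁻¹ •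
        ∑ i ∈ Finset.range (k (l + 1) - k l),
          (t (k l + i + 1) - t (k l + i)) • L (t (k l + i))).mulVecLin
      = LinearMap.range (C * (oneN ⊗ₖ Ψ)).mulVecLin)
    (Φl : ℕ → Matrix (Fin n × Fin d) (Fin n × Fin d) ℝ)
    (hΦl : ∀ l : ℕ, Φl l = ((List.ofFn fun i : Fin (k (l + 1) - k l) =>
      NormedSpace.exp
        (-(t (k l + (i : ℕ) + 1) - t (k l + (i : ℕ))) • L (t (k l + (i : ℕ))))).reverse).prod)
    (hμ : ∀ l : ℕ, ∃ μ : Fin (n * d) → ℝ, Antitone μ ∧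
      ((Φl l)ᵀ * Φl l).charpoly = (∏ i : Fin (n * d), (Polynomial.X - Polynomial.C (μ i))) ∧
      ∀ i : Fin (n * d), (i : ℕ) = m → μ i ≤ q) :
    ∀ x : ℝ → (Fin n × Fin d → ℝ),
      (∀ k' : ℕ, ∀ s ∈ Set.Icc (t k') (t (k' + 1)),
        x s = NormedSpace.exp (-(s - t k') • L (t k')) *ᵥ x (t k')) →
      Tendsto x atTop
        (nhds ((n : ℝ)⁻¹ • ((C * ((oneN ⊗ₖ Ψ) * (oneNᵀ ⊗ₖ Ψᵀ)) * C) *ᵥ x 0))) :=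
  bipartite_consensus_switching_general n d m t ht0 htmono htlim L hLpsd k hk0 hkmono q hq Ψ hΨ σ hσ
    C hC oneN honeN hker Φl hΦl hμ
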